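/- arXiv:1603.03981 — 2 statements merged into one kernel-verified Lean document; each statement's English description precedes it below -/
import Mathlib

section
/- The exponential generating function f(x) = Σ_{n≥1} t_n · x^n/n!, where t_n is the number of rooted trees with n labeled leaves in which every internal vertex has at least two children (phylogenetic trees / total partitions), satisfies the functional equation 1 − x + 2·f(x) = exp(f(x)) as formal power series. -/
open PowerSeries

/-- A simplified assembly tree on a finite leaf set `X`, encoded by the family of labels of
its vertices: it contains the full set (root) and all singletons (leaves), its members are
nonempty, and it is laminar; this exactly encodes rooted leaf-labeled trees in which every
internal vertex has at least two rootChildren. -/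
def IsAssemblyTree {X : Type*} [Fintype X] [DecidableEq X] (T : Finset (Finset X)) : Prop :=
  (∀ A ∈ T, A.Nonempty) ∧ Finset.univ ∈ T ∧ (∀ x : X, {x} ∈ T) ∧
    ∀ A ∈ T, ∀ B ∈ T, A ⊆ B ∨ B ⊆ A ∨ Disjoint A B

/-- The number `t n` of rooted trees with `n` labeled leaves in which every internal vertex
has at least two rootChildren (total partitions, OEIS A000311). -/
noncomputable def t (n : ℕ) : ℕ := Nat.card {T : Finset (Finset (Fin n)) // IsAssemblyTree T}

/-- The exponential generating function `f(x) = Σ_{n ≥ 1} t_n x^n / n!`. -/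
noncomputable def f : PowerSeries ℚ :=
  PowerSeries.mk fun n => if n = 0 then 0 else (t n : ℚ) / (n.factorial : ℚ)

/-- The composition `exp ∘ g` for a power series `g` with zero constant term:
its `n`-th coefficient is `Σ_{k ≤ n} (coeff n g^k) / k!`. -/
noncomputable def expComp (g : PowerSeries ℚ) : PowerSeries ℚ :=
  PowerSeries.mk fun n =>
    ∑ k ∈ Finset.range (n + 1), (PowerSeries.coeff (R := ℚ) n (g ^ k)) / (k.factorial : ℚ)

/-!
A tree with at least two leaves is obtained by placing a new root above `k ≥ 2` trees whose
leaf sets partition the leaves, and each tree whose root has `k` children arises in this way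
from exactly `k!` ordered `k`-tuples of trees. Ordered `k`-tuples of trees on an `n`-element
set are counted by `n! [xⁿ] fᵏ`, since multiplying exponential generating functions counts
pairs of structures on complementary subsets. Hence `∑_{k ≥ 2} fᵏ / k! = f - x` in degrees
`n ≥ 2`, which is `exp f - 1 - f = f - x`.
-/

open Finset Function
open scoped Nat

lemma PowerSeries.factorial_mul_coeff_mul {R : Type*} [CommSemiring R] (g h : PowerSeries R)
    (n : ℕ) : (n ! : R) * coeff n (g * h) = ∑ j ∈ range (n + 1),
      (n.choose j : R) * ((j ! : R) * coeff j g) * (((n - j)! : R) * coeff (n - j) h) := by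
  rw [coeff_mul, Nat.sum_antidiagonal_eq_sum_range_succ_mk, mul_sum]
  refine sum_congr rfl fun j hj => ?_
  rw [← Nat.choose_mul_factorial_mul_factorial (Nat.lt_succ_iff.1 (mem_range.1 hj))]
  push_cast
  ring

lemma Nat.card_equiv {α β : Type*} [Finite α] [Finite β] :
    Nat.card (α ≃ β) = if Nat.card α = Nat.card β then (Nat.card α)! else 0 := by
  classical
  split_ifs with h
  · obtain ⟨e⟩ := Finite.card_eq.1 h
    have := Fintype.ofFinite α
    have := Fintype.ofFinite β
    simp only [Nat.card_eq_fintype_card, Fintype.card_equiv e]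
  · have : IsEmpty (α ≃ β) := ⟨fun e => h (Nat.card_congr e)⟩
    exact Nat.card_of_isEmpty

lemma card_fin_equiv_div_factorial {α : Type*} (k : ℕ) (s : Finset α) :
    (Nat.card (Fin k ≃ s) : ℚ) / k ! = if #s = k then 1 else 0 := by
  rw [Nat.card_equiv, Nat.card_fin, Nat.card_eq_finsetCard]
  by_cases h : #s = k
  · simp [h, Nat.factorial_ne_zero]
  · simp [h, Ne.symm h]

section Trees

variable {X Y : Type*}

structure IsTreeOn (s : Finset X) (T : Finset (Finset X)) : Prop where
  nonempty : ∀ A ∈ T, A.Nonempty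
  self_mem : s ∈ T
  subset : ∀ A ∈ T, A ⊆ s
  singleton_mem : ∀ x ∈ s, {x} ∈ T
  laminar : ∀ A ∈ T, ∀ B ∈ T, A ⊆ B ∨ B ⊆ A ∨ Disjoint A B

abbrev TreeOn (s : Finset X) := {T : Finset (Finset X) // IsTreeOn s T}

lemma isTreeOn_univ_iff [Fintype X] [DecidableEq X] {T : Finset (Finset X)} :
    IsTreeOn univ T ↔ IsAssemblyTree T :=
  ⟨fun h => ⟨h.nonempty, h.self_mem, fun x => h.singleton_mem x (mem_univ x), h.laminar⟩,
    fun ⟨h₁, h₂, h₃, h₄⟩ => ⟨h₁, h₂, fun A _ => subset_univ A, fun x _ => h₃ x, h₄⟩⟩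

lemma card_treeOn_univ_fin (n : ℕ) : Nat.card (TreeOn (univ : Finset (Fin n))) = t n :=
  Nat.card_congr (Equiv.subtypeEquivRight fun _ => isTreeOn_univ_iff)

lemma IsTreeOn.nonempty_self {s : Finset X} {T : Finset (Finset X)} (h : IsTreeOn s T) :
    s.Nonempty :=
  h.nonempty s h.self_mem

lemma IsTreeOn.filter_subset [DecidableEq X] {s C : Finset X} {T : Finset (Finset X)}
    (h : IsTreeOn s T) (hC : C ∈ T) : IsTreeOn C {A ∈ T | A ⊆ C} where
  nonempty A hA := h.nonempty A (mem_filter.1 hA).1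
  self_mem := mem_filter.2 ⟨hC, Subset.rfl⟩
  subset _ hA := (mem_filter.1 hA).2
  singleton_mem x hx :=
    mem_filter.2 ⟨h.singleton_mem x (h.subset C hC hx), singleton_subset_iff.2 hx⟩
  laminar A hA B hB := h.laminar A (mem_filter.1 hA).1 B (mem_filter.1 hB).1

lemma isTreeOn_singleton_iff {x : X} {T : Finset (Finset X)} : IsTreeOn {x} T ↔ T = {{x}} := by
  constructor
  · intro h
    refine eq_singleton_iff_unique_mem.2 ⟨h.self_mem, fun A hA => ?_⟩
    exact (subset_singleton_iff.1 (h.subset A hA)).resolve_left (h.nonempty A hA).ne_empty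
  · rintro rfl
    exact ⟨by simp, mem_singleton_self _, by simp, by simp, by simp⟩

lemma isTreeOn_map_iff (e : X ↪ Y) {s : Finset X} {T : Finset (Finset X)} :
    IsTreeOn (s.map e) (T.map (mapEmbedding e).toEmbedding) ↔ IsTreeOn s T := by
  have hmem : ∀ A, A.map e ∈ T.map (mapEmbedding e).toEmbedding ↔ A ∈ T :=
    fun A => mem_map' (mapEmbedding e).toEmbedding
  constructor
  · intro h
    refine ⟨fun A hA => ?_, ?_, fun A hA => ?_, fun x hx => ?_, fun A hA B hB => ?_⟩
    · exact map_nonempty.1 (h.nonempty _ ((hmem A).2 hA))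
    · exact (hmem s).1 h.self_mem
    · exact map_subset_map.1 (h.subset _ ((hmem A).2 hA))
    · simpa [← map_singleton, hmem] using h.singleton_mem (e x) (mem_map_of_mem _ hx)
    · simpa [disjoint_map] using h.laminar _ ((hmem A).2 hA) _ ((hmem B).2 hB)
  · intro h
    refine ⟨?_, (hmem s).2 h.self_mem, ?_, ?_, ?_⟩ <;> simp only [forall_mem_map]
    · exact fun A hA => map_nonempty.2 (h.nonempty A hA)
    · exact fun A hA => map_subset_map.2 (h.subset A hA)
    · exact fun x hx => by simpa [← map_singleton, hmem] using h.singleton_mem x hx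
    · intro A hA B hB
      simpa [disjoint_map] using h.laminar A hA B hB

lemma card_treeOn_map (e : X ↪ Y) (s : Finset X) :
    Nat.card (TreeOn (s.map e)) = Nat.card (TreeOn s) := by
  set Φ := (mapEmbedding e).toEmbedding
  refine (Nat.card_eq_of_bijective (fun T => ⟨T.1.map Φ, (isTreeOn_map_iff e).2 T.2⟩)
    ⟨fun T T' h => Subtype.ext (map_injective Φ (congrArg Subtype.val h)), ?_⟩).symm
  rintro ⟨T', hT'⟩
  have hsub : T' ⊆ s.powerset.map Φ := fun B hB => by
    obtain ⟨A, hA, rfl⟩ := subset_map_iff.1 (hT'.subset B hB)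
    exact mem_map_of_mem Φ (mem_powerset.2 hA)
  obtain ⟨T, -, rfl⟩ := subset_map_iff.1 hsub
  exact ⟨⟨T, (isTreeOn_map_iff e).1 hT'⟩, rfl⟩

lemma card_treeOn (s : Finset X) : Nat.card (TreeOn s) = t #s := by
  let e : Fin s.card ↪ X := s.equivFin.symm.toEmbedding.trans (Embedding.subtype _)
  have he : univ.map e = s := by
    rw [← map_map, univ_map_equiv_to_embedding, univ_eq_attach, attach_map_val]
  rw [← card_treeOn_univ_fin, ← card_treeOn_map e, he]

lemma t_zero : t 0 = 0 := by
  rw [← card_treeOn_univ_fin, Nat.card_eq_zero]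
  exact Or.inl ⟨fun T => by simpa using T.2.nonempty_self⟩

lemma t_one : t 1 = 1 := by
  have h := card_treeOn ({0} : Finset (Fin 1))
  simp only [TreeOn, isTreeOn_singleton_iff, Nat.card_unique, card_singleton] at h
  exact h.symm

end Trees

lemma coeff_f (n : ℕ) : coeff n f = t n / n ! := by
  rw [f, coeff_mk]
  split_ifs with h
  · simp [h, t_zero]
  · rfl

lemma factorial_mul_coeff_f (n : ℕ) : (n ! : ℚ) * coeff n f = t n := by
  rw [coeff_f]
  field_simp

section Forests

variable {X : Type*}

structure IsForestOn (s : Finset X) {k : ℕ} (p : Fin k → Finset X × Finset (Finset X)) :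
    Prop where
  pairwise_disjoint : Pairwise fun i j => Disjoint (p i).1 (p j).1
  mem_iff : ∀ x, x ∈ s ↔ ∃ i, x ∈ (p i).1
  isTreeOn : ∀ i, IsTreeOn (p i).1 (p i).2

abbrev ForestOn (k : ℕ) (s : Finset X) :=
  {p : Fin k → Finset X × Finset (Finset X) // IsForestOn s p}

namespace IsForestOn

variable {s : Finset X} {k : ℕ} {p : Fin k → Finset X × Finset (Finset X)}

lemma fst_subset (hp : IsForestOn s p) (i : Fin k) : (p i).1 ⊆ s :=
  fun x hx => (hp.mem_iff x).2 ⟨i, hx⟩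

lemma eq_of_subset_of_mem (hp : IsForestOn s p) {A : Finset X} {i j : Fin k}
    (hA : A ∈ (p j).2) (hAi : A ⊆ (p i).1) : i = j := by
  by_contra hij
  obtain ⟨x, hx⟩ := (hp.isTreeOn j).nonempty A hA
  exact disjoint_left.1 (hp.pairwise_disjoint hij) (hAi hx) ((hp.isTreeOn j).subset A hA hx)

lemma injective_fst (hp : IsForestOn s p) : Injective fun i => (p i).1 :=
  fun _ j hij => hp.eq_of_subset_of_mem (hp.isTreeOn j).self_mem hij.ge

lemma fst_ne (hp : IsForestOn s p) (hk : 2 ≤ k) (i : Fin k) : (p i).1 ≠ s := by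
  have : Nontrivial (Fin k) := Fin.nontrivial_iff_two_le.2 hk
  obtain ⟨j, hji⟩ := exists_ne i
  obtain ⟨x, hx⟩ := (hp.isTreeOn j).nonempty_self
  exact fun h => disjoint_left.1 (hp.pairwise_disjoint hji) hx (h ▸ hp.fst_subset j hx)

variable [DecidableEq X]

lemma tail {p : Fin (k + 1) → Finset X × Finset (Finset X)} (hp : IsForestOn s p) :
    IsForestOn (s \ (p 0).1) (Fin.tail p) where
  pairwise_disjoint i j hij := hp.pairwise_disjoint ((Fin.succ_injective k).ne hij)
  mem_iff x := by
    rw [mem_sdiff, hp.mem_iff, Fin.exists_fin_succ]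
    refine ⟨fun ⟨h, h0⟩ => h.resolve_left h0, fun ⟨i, hi⟩ => ⟨Or.inr ⟨i, hi⟩, fun h0 => ?_⟩⟩
    exact disjoint_left.1 (hp.pairwise_disjoint (Fin.succ_ne_zero i)) hi h0
  isTreeOn i := hp.isTreeOn i.succ

lemma cons {a : Finset X} {T : Finset (Finset X)} (ha : a ⊆ s) (hT : IsTreeOn a T)
    {q : Fin k → Finset X × Finset (Finset X)} (hq : IsForestOn (s \ a) q) :
    IsForestOn s (Fin.cons (a, T) q) where
  pairwise_disjoint := by
    have h0 : ∀ i, Disjoint a (q i).1 := fun i => disjoint_sdiff.mono_right (hq.fst_subset i)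
    intro i j hij
    cases i using Fin.cases <;> cases j using Fin.cases
    · exact absurd rfl hij
    · exact h0 _
    · exact (h0 _).symm
    · exact hq.pairwise_disjoint fun h => hij (congrArg Fin.succ h)
  mem_iff x := by
    rw [Fin.exists_fin_succ]
    simp only [Fin.cons_zero, Fin.cons_succ, ← hq.mem_iff, mem_sdiff]
    by_cases hx : x ∈ a
    · simp [hx, ha hx]
    · simp [hx]
  isTreeOn i := by
    cases i using Fin.cases
    · exact hT
    · exact hq.isTreeOn _

end IsForestOn

def forestOnSuccEquiv [DecidableEq X] (k : ℕ) (s : Finset X) :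
    ForestOn (k + 1) s ≃ Σ a : s.powerset, TreeOn a.1 × ForestOn k (s \ a.1) where
  toFun p := ⟨⟨(p.1 0).1, mem_powerset.2 (p.2.fst_subset 0)⟩, ⟨(p.1 0).2, p.2.isTreeOn 0⟩,
    ⟨Fin.tail p.1, p.2.tail⟩⟩
  invFun z := ⟨Fin.cons (z.1.1, z.2.1.1) z.2.2.1,
    IsForestOn.cons (mem_powerset.1 z.1.2) z.2.1.2 z.2.2.2⟩
  left_inv p := Subtype.ext (Fin.cons_self_tail p.1)
  right_inv _ := rfl

lemma card_forestOn_zero (s : Finset X) :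
    Nat.card (ForestOn 0 s) = if #s = 0 then 1 else 0 := by
  split_ifs with hs
  · obtain rfl := card_eq_zero.1 hs
    exact Nat.card_eq_one_iff_unique.2 ⟨⟨fun p q => Subtype.ext (funext fun i => i.elim0)⟩,
      ⟨⟨Fin.elim0, fun i => i.elim0, by simp, fun i => i.elim0⟩⟩⟩
  · have : IsEmpty (ForestOn 0 s) :=
      ⟨fun p => hs (card_eq_zero.2 (eq_empty_of_forall_notMem fun x => by simp [p.2.mem_iff x]))⟩
    exact Nat.card_of_isEmpty

lemma card_forestOn_succ [Finite X] [DecidableEq X] (k : ℕ) (s : Finset X) :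
    Nat.card (ForestOn (k + 1) s) = ∑ a ∈ s.powerset, t #a * Nat.card (ForestOn k (s \ a)) := by
  rw [Nat.card_congr (forestOnSuccEquiv k s), Nat.card_sigma,
    ← sum_coe_sort s.powerset fun a => t #a * Nat.card (ForestOn k (s \ a))]
  simp only [Nat.card_prod, card_treeOn]

lemma card_forestOn [Finite X] [DecidableEq X] (k : ℕ) (s : Finset X) :
    (Nat.card (ForestOn k s) : ℚ) = (#s)! * coeff #s (f ^ k) := by
  induction k generalizing s with
  | zero =>
    rw [card_forestOn_zero, pow_zero, coeff_one]
    split_ifs with hs <;> simp [hs]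
  | succ k ih =>
    calc (Nat.card (ForestOn (k + 1) s) : ℚ)
        = ∑ a ∈ s.powerset, (t #a : ℚ) * ((#s - #a)! * coeff (#s - #a) (f ^ k)) := by
          push_cast [card_forestOn_succ]
          refine sum_congr rfl fun a ha => ?_
          rw [ih, card_sdiff_of_subset (mem_powerset.1 ha)]
      _ = ∑ j ∈ range (#s + 1),
            ((#s).choose j : ℚ) * (t j * ((#s - j)! * coeff (#s - j) (f ^ k))) := by
          rw [sum_powerset_apply_card fun j => (t j : ℚ) * ((#s - j)! * coeff (#s - j) (f ^ k))]
          simp only [nsmul_eq_mul]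
      _ = (#s)! * coeff #s (f ^ (k + 1)) := by
          rw [pow_succ', PowerSeries.factorial_mul_coeff_mul]
          simp only [factorial_mul_coeff_f, mul_assoc]

end Forests

section Children

variable {X : Type*} [Fintype X] [DecidableEq X] {T : Finset (Finset X)} {A : Finset X}

open Classical in
noncomputable def rootChildren (T : Finset (Finset X)) : Finset (Finset X) :=
  {A ∈ T.erase univ | Maximal (· ∈ T.erase univ) A}

lemma mem_rootChildren : A ∈ rootChildren T ↔ Maximal (· ∈ T.erase univ) A := by
  simp only [rootChildren, mem_filter, and_iff_right_iff_imp]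
  exact Maximal.prop

lemma exists_mem_rootChildren_superset (hA : A ∈ T) (hAu : A ≠ univ) :
    ∃ C ∈ rootChildren T, A ⊆ C := by
  obtain ⟨C, hAC, hC⟩ := (T.erase univ).exists_le_maximal (mem_erase.2 ⟨hAu, hA⟩)
  exact ⟨C, mem_rootChildren.2 hC, hAC⟩

namespace IsTreeOn

variable (hT : IsTreeOn univ T)
include hT

lemma eq_or_disjoint_of_mem_rootChildren {C D : Finset X} (hC : C ∈ rootChildren T)
    (hD : D ∈ rootChildren T) : C = D ∨ Disjoint C D := by
  rw [mem_rootChildren] at hC hD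
  rcases hT.laminar C (mem_of_mem_erase hC.prop) D (mem_of_mem_erase hD.prop) with h | h | h
  · exact Or.inl (hC.eq_of_le hD.prop h)
  · exact Or.inl (hD.eq_of_le hC.prop h).symm
  · exact Or.inr h

lemma card_rootChildren_le : #(rootChildren T) ≤ Fintype.card X := by
  refine (card_le_card_biUnion (f := id) (fun C hC D hD hCD => ?_) fun C hC => ?_).trans
    (card_le_univ _)
  · exact (hT.eq_or_disjoint_of_mem_rootChildren hC hD).resolve_left hCD
  · exact hT.nonempty C (mem_of_mem_erase (mem_rootChildren.1 hC).prop)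

lemma exists_mem_rootChildren [Nontrivial X] (x : X) : ∃ C ∈ rootChildren T, x ∈ C := by
  obtain ⟨C, hC, hxC⟩ :=
    exists_mem_rootChildren_superset (hT.singleton_mem x (mem_univ x)) (singleton_ne_univ x)
  exact ⟨C, hC, hxC (mem_singleton_self x)⟩

lemma two_le_card_rootChildren [Nontrivial X] : 2 ≤ #(rootChildren T) := by
  obtain ⟨C, hC, -⟩ := hT.exists_mem_rootChildren (Classical.arbitrary X)
  have hCu : C ≠ univ := ne_of_mem_erase (mem_rootChildren.1 hC).prop
  obtain ⟨y, hy⟩ := not_forall.1 (mt eq_univ_iff_forall.2 hCu)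
  obtain ⟨D, hD, hyD⟩ := hT.exists_mem_rootChildren y
  exact one_lt_card.2 ⟨C, hC, D, hD, fun h => hy (h ▸ hyD)⟩

end IsTreeOn

end Children

section Graft

variable {X : Type*} [Fintype X] [DecidableEq X] {k : ℕ}

def graft (p : Fin k → Finset X × Finset (Finset X)) : Finset (Finset X) :=
  insert univ (univ.biUnion fun i => (p i).2)

lemma mem_graft {p : Fin k → Finset X × Finset (Finset X)} {A : Finset X} :
    A ∈ graft p ↔ A = univ ∨ ∃ i, A ∈ (p i).2 := by
  simp [graft]

namespace IsForestOn

variable {p : Fin k → Finset X × Finset (Finset X)} (hp : IsForestOn univ p)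
include hp

lemma isTreeOn_graft [Nonempty X] : IsTreeOn univ (graft p) where
  nonempty A hA := by
    obtain rfl | ⟨i, hi⟩ := mem_graft.1 hA
    · exact univ_nonempty
    · exact (hp.isTreeOn i).nonempty A hi
  self_mem := mem_insert_self _ _
  subset A _ := subset_univ A
  singleton_mem x _ := by
    obtain ⟨i, hi⟩ := (hp.mem_iff x).1 (mem_univ x)
    exact mem_graft.2 (Or.inr ⟨i, (hp.isTreeOn i).singleton_mem x hi⟩)
  laminar A hA B hB := by
    obtain rfl | ⟨i, hi⟩ := mem_graft.1 hA
    · exact Or.inr (Or.inl (subset_univ B))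
    obtain rfl | ⟨j, hj⟩ := mem_graft.1 hB
    · exact Or.inl (subset_univ A)
    obtain rfl | hij := eq_or_ne i j
    · exact (hp.isTreeOn i).laminar A hi B hj
    · exact Or.inr (Or.inr ((hp.pairwise_disjoint hij).mono
        ((hp.isTreeOn i).subset A hi) ((hp.isTreeOn j).subset B hj)))

lemma mem_rootChildren_graft (hk : 2 ≤ k) {A : Finset X} :
    A ∈ rootChildren (graft p) ↔ ∃ i, (p i).1 = A := by
  have hfst : ∀ i, (p i).1 ∈ (graft p).erase univ := fun i =>
    mem_erase.2 ⟨hp.fst_ne hk i, mem_graft.2 (Or.inr ⟨i, (hp.isTreeOn i).self_mem⟩)⟩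
  rw [mem_rootChildren]
  constructor
  · intro hA
    obtain ⟨hAu, hAg⟩ := mem_erase.1 hA.prop
    obtain ⟨i, hi⟩ := (mem_graft.1 hAg).resolve_left hAu
    exact ⟨i, (hA.eq_of_le (hfst i) ((hp.isTreeOn i).subset A hi)).symm⟩
  · rintro ⟨i, rfl⟩
    refine ⟨hfst i, fun B hB hiB => ?_⟩
    obtain ⟨hBu, hBg⟩ := mem_erase.1 hB
    obtain ⟨j, hj⟩ := (mem_graft.1 hBg).resolve_left hBu
    obtain rfl := hp.eq_of_subset_of_mem (hp.isTreeOn i).self_mem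
      (hiB.trans ((hp.isTreeOn j).subset B hj))
    exact (hp.isTreeOn _).subset B hj

lemma filter_subset_fst_graft (hk : 2 ≤ k) (i : Fin k) :
    {A ∈ graft p | A ⊆ (p i).1} = (p i).2 := by
  ext B
  rw [mem_filter, mem_graft]
  constructor
  · rintro ⟨rfl | ⟨j, hj⟩, hB⟩
    · exact absurd (univ_subset_iff.1 hB) (hp.fst_ne hk i)
    · obtain rfl := hp.eq_of_subset_of_mem hj hB
      exact hj
  · exact fun hB => ⟨Or.inr ⟨i, hB⟩, (hp.isTreeOn i).subset B hB⟩

end IsForestOn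

def branches (T : Finset (Finset X)) (e : Fin k → Finset X) :
    Fin k → Finset X × Finset (Finset X) :=
  fun i => (e i, {A ∈ T | A ⊆ e i})

namespace IsTreeOn

variable {T : Finset (Finset X)} (hT : IsTreeOn univ T) (e : Fin k ≃ rootChildren T)
include hT

lemma isForestOn_branches [Nontrivial X] :
    IsForestOn univ (branches T fun i => (e i).1) where
  pairwise_disjoint i j hij := (hT.eq_or_disjoint_of_mem_rootChildren (e i).2 (e j).2).resolve_left
    fun h => hij (e.injective (Subtype.ext h))
  mem_iff x := by
    obtain ⟨C, hC, hxC⟩ := hT.exists_mem_rootChildren x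
    exact ⟨fun _ => ⟨e.symm ⟨C, hC⟩, by simpa [branches] using hxC⟩, fun _ => mem_univ x⟩
  isTreeOn i := hT.filter_subset (mem_of_mem_erase (mem_rootChildren.1 (e i).2).prop)

lemma graft_branches : graft (branches T fun i => (e i).1) = T := by
  ext A
  rw [mem_graft]
  constructor
  · rintro (rfl | ⟨i, hi⟩)
    · exact hT.self_mem
    · exact (mem_filter.1 hi).1
  · intro hA
    by_cases hAu : A = univ
    · exact Or.inl hAu
    obtain ⟨C, hC, hAC⟩ := exists_mem_rootChildren_superset hA hAu
    exact Or.inr ⟨e.symm ⟨C, hC⟩, mem_filter.2 ⟨hA, by simpa using hAC⟩⟩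

end IsTreeOn

def graftTree [Nonempty X] (p : ForestOn k (univ : Finset X)) : TreeOn (univ : Finset X) :=
  ⟨graft p.1, p.2.isTreeOn_graft⟩

noncomputable def graftTreeFiberEquiv [Nontrivial X] (hk : 2 ≤ k) (T : TreeOn (univ : Finset X)) :
    {p : ForestOn k (univ : Finset X) // graftTree p = T} ≃ (Fin k ≃ rootChildren T.1) where
  toFun p :=
    have hmem : ∀ A, A ∈ rootChildren T.1 ↔ ∃ i, (p.1.1 i).1 = A := fun A => by
      rw [← congrArg Subtype.val p.2, graftTree, p.1.2.mem_rootChildren_graft hk]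
    Equiv.ofBijective (fun i => ⟨(p.1.1 i).1, (hmem _).2 ⟨i, rfl⟩⟩)
      ⟨fun i j hij => p.1.2.injective_fst (congrArg Subtype.val hij), fun C => by
        obtain ⟨i, hi⟩ := (hmem C.1).1 C.2
        exact ⟨i, Subtype.ext hi⟩⟩
  invFun e := ⟨⟨branches T.1 fun i => (e i).1, T.2.isForestOn_branches e⟩,
    Subtype.ext (T.2.graft_branches e)⟩
  left_inv p := by
    refine Subtype.ext (Subtype.ext (funext fun i => Prod.ext rfl ?_))
    change {A ∈ T.1 | A ⊆ (p.1.1 i).1} = (p.1.1 i).2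
    rw [← congrArg Subtype.val p.2]
    exact p.1.2.filter_subset_fst_graft hk i
  right_inv _ := Equiv.ext fun _ => rfl

end Graft

section Counting

variable {X : Type*} [Fintype X] [DecidableEq X]

noncomputable instance : Fintype (TreeOn (univ : Finset X)) := Fintype.ofFinite _

lemma card_forestOn_univ [Nontrivial X] {k : ℕ} (hk : 2 ≤ k) :
    Nat.card (ForestOn k (univ : Finset X)) =
      ∑ T : TreeOn (univ : Finset X), Nat.card (Fin k ≃ rootChildren T.1) := by
  rw [← Nat.card_congr (Equiv.sigmaFiberEquiv graftTree), Nat.card_sigma]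
  exact sum_congr rfl fun T _ => Nat.card_congr (graftTreeFiberEquiv hk T)

lemma sum_card_forestOn_div_factorial [Nontrivial X] :
    ∑ k ∈ Icc 2 (Fintype.card X), (Nat.card (ForestOn k (univ : Finset X)) : ℚ) / k ! =
      Nat.card (TreeOn (univ : Finset X)) := by
  calc _ = ∑ T : TreeOn (univ : Finset X),
        ∑ k ∈ Icc 2 (Fintype.card X), if #(rootChildren T.1) = k then (1 : ℚ) else 0 := by
        rw [sum_comm]
        refine sum_congr rfl fun k hk => ?_
        simp only [card_forestOn_univ (mem_Icc.1 hk).1, Nat.cast_sum, sum_div,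
          card_fin_equiv_div_factorial]
    _ = ∑ _T : TreeOn (univ : Finset X), (1 : ℚ) := sum_congr rfl fun T _ => by
        rw [sum_ite_eq, if_pos (mem_Icc.2 ⟨T.2.two_le_card_rootChildren, T.2.card_rootChildren_le⟩)]
    _ = _ := by simp [Nat.card_eq_fintype_card]

end Counting

lemma coeff_pow_f (k n : ℕ) :
    coeff n (f ^ k) = Nat.card (ForestOn k (univ : Finset (Fin n))) / n ! := by
  rw [card_forestOn, card_univ, Fintype.card_fin]
  field_simp

lemma sum_coeff_pow_f_div_factorial {n : ℕ} (hn : 2 ≤ n) :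
    ∑ k ∈ Icc 2 n, coeff n (f ^ k) / k ! = coeff n f := by
  have : Nontrivial (Fin n) := Fin.nontrivial_iff_two_le.2 hn
  have h := sum_card_forestOn_div_factorial (X := Fin n)
  rw [Fintype.card_fin, card_treeOn_univ_fin] at h
  rw [coeff_f, ← h, sum_div]
  exact sum_congr rfl fun k _ => by rw [coeff_pow_f]; ring

/-- The functional equation `1 - x + 2 f(x) = exp (f(x))` of formal power series. -/
theorem egf_functional_equation :
    (1 : PowerSeries ℚ) - PowerSeries.X + 2 * f = expComp f := by
  ext n
  rw [two_mul, map_add, map_add, map_sub, expComp, coeff_mk]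
  rcases n with _ | _ | n
  · simp [coeff_f, t_zero]
  · simp [sum_range_succ, coeff_f, t_one, coeff_X]
  · rw [range_eq_Ico, sum_eq_sum_Ico_succ_bot (by omega), sum_eq_sum_Ico_succ_bot (by omega),
      Ico_add_one_right_eq_Icc, sum_coeff_pow_f_div_factorial (by omega)]
    simp [coeff_one, coeff_X]
end

section
/- Exactly 26 rooted trees exist with leaves bijectively labeled by {1,2,3,4} in which every internal vertex has at least two children, and under the action of the Klein four-group {id, (12)(34), (13)(24), (14)(23)} on the leaf labels, these 26 trees split into exactly 11 orbits: four orbits of size 1, three orbits of size 2, and four orbits of size 4. -/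
/-- The induced action of a permutation of the leaf labels on (the encoding of) a tree. -/
def mapTree {X : Type*} [Fintype X] [DecidableEq X] (g : Equiv.Perm X)
    (T : Finset (Finset X)) : Finset (Finset X) :=
  T.image (fun A => A.image g)

/-- The Klein four-group `{id, (12)(34), (13)(24), (14)(23)}` as a set of permutations of
`{1,2,3,4}` (here `Fin 4`). -/
def kleinFour : Set (Equiv.Perm (Fin 4)) :=
  {1, Equiv.swap 0 1 * Equiv.swap 2 3, Equiv.swap 0 2 * Equiv.swap 1 3,
    Equiv.swap 0 3 * Equiv.swap 1 2}

/-- The orbit of a tree under the Klein four-group. -/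
def orbitOf (T : Finset (Finset (Fin 4))) : Set (Finset (Finset (Fin 4))) :=
  {T' | ∃ g ∈ kleinFour, mapTree g T = T'}

/-! ### Auxiliary machinery -/

instance {X : Type*} [Fintype X] [DecidableEq X] : DecidablePred (IsAssemblyTree (X := X)) :=
  fun T => by unfold IsAssemblyTree; infer_instance

/-- The base family: root and leaves. -/
def Bfin : Finset (Finset (Fin 4)) := {Finset.univ, {0}, {1}, {2}, {3}}

/-- Laminarity of a family. -/
def Lam (E : Finset (Finset (Fin 4))) : Prop :=
  ∀ A ∈ E, ∀ B ∈ E, A ⊆ B ∨ B ⊆ A ∨ Disjoint A B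

instance : DecidablePred Lam := fun E => by unfold Lam; infer_instance

def P23 : Finset (Finset (Fin 4)) := Finset.univ.filter (fun A => A.card = 2 ∨ A.card = 3)

def goodE : Finset (Finset (Finset (Fin 4))) := P23.powerset.filter Lam

def treesF : Finset (Finset (Finset (Fin 4))) := goodE.image (fun E => Bfin ∪ E)

def kleinF : Finset (Equiv.Perm (Fin 4)) :=
  {1, Equiv.swap 0 1 * Equiv.swap 2 3, Equiv.swap 0 2 * Equiv.swap 1 3,
    Equiv.swap 0 3 * Equiv.swap 1 2}

def orbitF (T : Finset (Finset (Fin 4))) : Finset (Finset (Finset (Fin 4))) :=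
  kleinF.image (fun g => mapTree g T)

def orbs : Finset (Finset (Finset (Finset (Fin 4)))) := treesF.image orbitF

set_option maxRecDepth 20000 in
set_option maxHeartbeats 2000000 in
lemma goodE_eq : goodE =
    {∅, {{0, 1}}, {{0, 2}}, {{1, 2}}, {{0, 1, 2}}, {{0, 1}, {0, 1, 2}}, {{0, 2}, {0, 1, 2}},
     {{1, 2}, {0, 1, 2}}, {{0, 3}}, {{1, 2}, {0, 3}}, {{1, 3}}, {{0, 2}, {1, 3}}, {{0, 1, 3}},
     {{0, 1}, {0, 1, 3}}, {{0, 3}, {0, 1, 3}}, {{1, 3}, {0, 1, 3}}, {{2, 3}}, {{0, 1}, {2, 3}},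
     {{0, 2, 3}}, {{0, 2}, {0, 2, 3}}, {{0, 3}, {0, 2, 3}}, {{2, 3}, {0, 2, 3}}, {{1, 2, 3}},
     {{1, 2}, {1, 2, 3}}, {{1, 3}, {1, 2, 3}}, {{2, 3}, {1, 2, 3}}} := by decide

lemma lam_base : ∀ A ∈ Bfin, ∀ B : Finset (Fin 4), A ⊆ B ∨ B ⊆ A ∨ Disjoint A B := by decide

lemma mem_treesF_iff (T : Finset (Finset (Fin 4))) : T ∈ treesF ↔ IsAssemblyTree T := by
  constructor
  · rintro hT
    simp only [treesF, Finset.mem_image] at hT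
    obtain ⟨E, hE, rfl⟩ := hT
    simp only [goodE, Finset.mem_filter, Finset.mem_powerset] at hE
    obtain ⟨hEP, hlam⟩ := hE
    have hcard : ∀ A ∈ E, A.card = 2 ∨ A.card = 3 := by
      intro A hA
      have := hEP hA
      simp only [P23, Finset.mem_filter] at this
      exact this.2
    refine ⟨?_, ?_, ?_, ?_⟩
    · intro A hA
      rcases Finset.mem_union.1 hA with h | h
      · fin_cases h <;> simp
      · rcases hcard A h with h2 | h2 <;> [skip; skip] <;>
          exact Finset.card_pos.1 (by omega)
    · exact Finset.mem_union_left _ (by simp [Bfin])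
    · intro x
      refine Finset.mem_union_left _ ?_
      fin_cases x <;> simp [Bfin]
    · intro A hA B hB
      rcases Finset.mem_union.1 hA with hA' | hA'
      · exact lam_base A hA' B
      · rcases Finset.mem_union.1 hB with hB' | hB'
        · rcases lam_base B hB' A with h | h | h
          · exact Or.inr (Or.inl h)
          · exact Or.inl h
          · exact Or.inr (Or.inr h.symm)
        · exact hlam A hA' B hB'
  · rintro ⟨hne, huniv, hsing, hlam⟩
    have hBsub : Bfin ⊆ T := by
      intro A hA
      simp only [Bfin, Finset.mem_insert, Finset.mem_singleton] at hA
      rcases hA with rfl | rfl | rfl | rfl | rfl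
      · exact huniv
      all_goals exact hsing _
    simp only [treesF, Finset.mem_image]
    refine ⟨T \ Bfin, ?_, Finset.union_sdiff_of_subset hBsub⟩
    simp only [goodE, Finset.mem_filter, Finset.mem_powerset]
    constructor
    · intro A hA
      obtain ⟨hAT, hAB⟩ := Finset.mem_sdiff.1 hA
      have h1 : 1 ≤ A.card := Finset.card_pos.2 (hne A hAT)
      have h4 : A.card ≤ 4 := by
        have := Finset.card_le_univ A
        simpa using this
      have hne1 : A.card ≠ 1 := by
        intro h
        obtain ⟨x, rfl⟩ := Finset.card_eq_one.1 h
        exact hAB (by fin_cases x <;> simp [Bfin])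
      have hne4 : A.card ≠ 4 := by
        intro h
        have : A = Finset.univ := Finset.eq_univ_of_card A (by simpa using h)
        exact hAB (by simp [this, Bfin])
      simp only [P23, Finset.mem_filter, Finset.mem_univ, true_and]
      omega
    · intro A hA B hB
      exact hlam A (Finset.mem_sdiff.1 hA).1 B (Finset.mem_sdiff.1 hB).1

lemma mem_kleinF_iff (g : Equiv.Perm (Fin 4)) : g ∈ kleinFour ↔ g ∈ kleinF := by
  simp [kleinFour, kleinF]

lemma orbitOf_eq (T : Finset (Finset (Fin 4))) : orbitOf T = ↑(orbitF T) := by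
  ext S
  simp only [orbitOf, Set.mem_setOf_eq, orbitF, Finset.coe_image, Set.mem_image,
    Finset.mem_coe]
  constructor
  · rintro ⟨g, hg, rfl⟩
    exact ⟨g, (mem_kleinF_iff g).1 hg, rfl⟩
  · rintro ⟨g, hg, rfl⟩
    exact ⟨g, (mem_kleinF_iff g).2 hg, rfl⟩

lemma trees_set_eq : {T : Finset (Finset (Fin 4)) | IsAssemblyTree T} = ↑treesF := by
  ext T
  simp [mem_treesF_iff]

lemma orbit_set_eq :
    {S : Set (Finset (Finset (Fin 4))) | ∃ T, IsAssemblyTree T ∧ orbitOf T = S} =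
      (fun F : Finset (Finset (Finset (Fin 4))) => (↑F : Set _)) '' ↑orbs := by
  ext S
  simp only [Set.mem_setOf_eq, Set.mem_image, Finset.mem_coe]
  constructor
  · rintro ⟨T, hT, rfl⟩
    exact ⟨orbitF T, Finset.mem_image_of_mem _ ((mem_treesF_iff T).2 hT), (orbitOf_eq T).symm⟩
  · rintro ⟨F, hF, rfl⟩
    obtain ⟨T, hT, rfl⟩ := Finset.mem_image.1 hF
    exact ⟨T, (mem_treesF_iff T).1 hT, orbitOf_eq T⟩

lemma orbit_set_eq_card (n : ℕ) :
    {S : Set (Finset (Finset (Fin 4))) |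
        (∃ T, IsAssemblyTree T ∧ orbitOf T = S) ∧ Nat.card S = n} =
      (fun F : Finset (Finset (Finset (Fin 4))) => (↑F : Set _)) ''
        ↑(orbs.filter (fun F => F.card = n)) := by
  ext S
  simp only [Set.mem_setOf_eq, Set.mem_image, Finset.mem_coe, Finset.mem_filter]
  constructor
  · rintro ⟨⟨T, hT, rfl⟩, hn⟩
    refine ⟨orbitF T, ⟨Finset.mem_image_of_mem _ ((mem_treesF_iff T).2 hT), ?_⟩,
      (orbitOf_eq T).symm⟩
    rw [orbitOf_eq T] at hn
    rwa [Nat.card_coe_set_eq, Set.ncard_coe_finset] at hn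
  · rintro ⟨F, ⟨hF, hc⟩, rfl⟩
    obtain ⟨T, hT, rfl⟩ := Finset.mem_image.1 hF
    refine ⟨⟨T, (mem_treesF_iff T).1 hT, orbitOf_eq T⟩, ?_⟩
    rw [Nat.card_coe_set_eq, Set.ncard_coe_finset]
    exact hc

lemma card_of_image_coe (t : Finset (Finset (Finset (Finset (Fin 4))))) :
    Nat.card ↥((fun F : Finset (Finset (Finset (Fin 4))) => (↑F : Set (Finset (Finset (Fin 4))))) '' ↑t) = t.card := by
  rw [Nat.card_coe_set_eq, Set.ncard_image_of_injective _ Finset.coe_injective,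
    Set.ncard_coe_finset]

/-- Exactly 26 simplified assembly trees exist on the leaf set `{1,2,3,4}`, and under the
Klein four-group they split into exactly 11 orbits: four of size 1, three of size 2 and four
of size 4. -/
theorem klein_orbits_of_trees_on_four_leaves :
    Nat.card {T : Finset (Finset (Fin 4)) // IsAssemblyTree T} = 26 ∧
    Nat.card {S : Set (Finset (Finset (Fin 4))) //
        (∃ T, IsAssemblyTree T ∧ orbitOf T = S)} = 11 ∧
    Nat.card {S : Set (Finset (Finset (Fin 4))) //
        (∃ T, IsAssemblyTree T ∧ orbitOf T = S) ∧ Nat.card S = 1} = 4 ∧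
    Nat.card {S : Set (Finset (Finset (Fin 4))) //
        (∃ T, IsAssemblyTree T ∧ orbitOf T = S) ∧ Nat.card S = 2} = 3 ∧
    Nat.card {S : Set (Finset (Finset (Fin 4))) //
        (∃ T, IsAssemblyTree T ∧ orbitOf T = S) ∧ Nat.card S = 4} = 4 := by
  refine ⟨?_, ?_, ?_, ?_, ?_⟩
  · show Nat.card {T : Finset (Finset (Fin 4)) | IsAssemblyTree T} = 26
    rw [Nat.card_coe_set_eq, trees_set_eq, Set.ncard_coe_finset]
    show (goodE.image (fun E => Bfin ∪ E)).card = 26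
    rw [goodE_eq]; decide
  · show Nat.card {S : Set (Finset (Finset (Fin 4))) |
        ∃ T, IsAssemblyTree T ∧ orbitOf T = S} = 11
    rw [orbit_set_eq, card_of_image_coe]
    show ((goodE.image (fun E => Bfin ∪ E)).image orbitF).card = 11
    rw [goodE_eq]; decide
  · show Nat.card {S : Set (Finset (Finset (Fin 4))) |
        (∃ T, IsAssemblyTree T ∧ orbitOf T = S) ∧ Nat.card S = 1} = 4
    rw [orbit_set_eq_card, card_of_image_coe]
    show (((goodE.image (fun E => Bfin ∪ E)).image orbitF).filter
      (fun F => F.card = 1)).card = 4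
    rw [goodE_eq]; decide
  · show Nat.card {S : Set (Finset (Finset (Fin 4))) |
        (∃ T, IsAssemblyTree T ∧ orbitOf T = S) ∧ Nat.card S = 2} = 3
    rw [orbit_set_eq_card, card_of_image_coe]
    show (((goodE.image (fun E => Bfin ∪ E)).image orbitF).filter
      (fun F => F.card = 2)).card = 3
    rw [goodE_eq]; decide
  · show Nat.card {S : Set (Finset (Finset (Fin 4))) |
        (∃ T, IsAssemblyTree T ∧ orbitOf T = S) ∧ Nat.card S = 4} = 4
    rw [orbit_set_eq_card, card_of_image_coe]
    show (((goodE.image (fun E => Bfin ∪ E)).image orbitF).filter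
      (fun F => F.card = 4)).card = 4
    rw [goodE_eq]; decide
end
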